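/- arXiv:2002.05586 — 4 statements merged into one kernel-verified Lean document; each statement's English description precedes it below -/
import Mathlib

section
/- Let A be an associative ring and let f ∈ A be a regular element (neither a left nor a right zero-divisor) such that ad(f) is locally nilpotent on A, i.e. for every a ∈ A there exists n ∈ ℕ with ad(f)^n(a) = 0. Then the multiplicative set S_f = {f^n : n ∈ ℕ₀} is a left and right Ore set of regular elements in A: every element f^n is regular, for every a ∈ A and n ∈ ℕ₀ there exist b ∈ A and m ∈ ℕ₀ with f^m · a = b · f^n, and there exist c ∈ A and r ∈ ℕ₀ with a · f^r = f^n · c. -/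
/-- Let `A` be an associative ring and `f ∈ A` a regular element (neither a left nor a right
zero-divisor, i.e. `IsRegular f`) such that `ad(f) : a ↦ f*a - a*f` is locally nilpotent on `A`.
Then the multiplicative set `S_f = {f^n : n ∈ ℕ}` is a left and right Ore set of regular
elements in `A`: every `f^n` is regular; for every `a ∈ A` and `n ∈ ℕ` there exist `b ∈ A`
and `m ∈ ℕ` with `f^m * a = b * f^n`; and there exist `c ∈ A` and `r ∈ ℕ` with
`a * f^r = f^n * c`. -/
theorem powers_form_ore_set_of_locally_ad_nilpotent
    {A : Type*} [Ring A] (f : A)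
    (hreg : IsRegular f)
    (hnil : ∀ a : A, ∃ n : ℕ, (fun x => f * x - x * f)^[n] a = 0) :
    (∀ n : ℕ, IsRegular (f ^ n)) ∧
    (∀ (a : A) (n : ℕ), ∃ (b : A) (m : ℕ), f ^ m * a = b * f ^ n) ∧
    (∀ (a : A) (n : ℕ), ∃ (c : A) (r : ℕ), a * f ^ r = f ^ n * c) := by
  have L1 : ∀ (N : ℕ) (a : A), (fun x => f * x - x * f)^[N] a = 0 →
      ∃ (b : A) (m : ℕ), f ^ m * a = b * f := by
    intro N
    induction N with
    | zero =>
      intro a ha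
      simp only [Function.iterate_zero, id_eq] at ha
      exact ⟨0, 0, by simp [ha]⟩
    | succ N ih =>
      intro a ha
      rw [Function.iterate_succ_apply] at ha
      obtain ⟨b, m, hb⟩ := ih _ ha
      refine ⟨f ^ m * a + b, m + 1, ?_⟩
      calc f ^ (m + 1) * a
          = f ^ m * (f * a - a * f) + f ^ m * a * f := by noncomm_ring
        _ = b * f + f ^ m * a * f := by rw [hb]
        _ = (f ^ m * a + b) * f := by noncomm_ring
  have L2 : ∀ (N : ℕ) (a : A), (fun x => f * x - x * f)^[N] a = 0 →
      ∃ (c : A) (r : ℕ), a * f ^ r = f * c := by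
    intro N
    induction N with
    | zero =>
      intro a ha
      simp only [Function.iterate_zero, id_eq] at ha
      exact ⟨0, 0, by simp [ha]⟩
    | succ N ih =>
      intro a ha
      rw [Function.iterate_succ_apply] at ha
      obtain ⟨c, r, hc⟩ := ih _ ha
      refine ⟨a * f ^ r - c, r + 1, ?_⟩
      calc a * f ^ (r + 1)
          = f * a * f ^ r - (f * a - a * f) * f ^ r := by rw [pow_succ']; noncomm_ring
        _ = f * a * f ^ r - f * c := by rw [hc]
        _ = f * (a * f ^ r - c) := by noncomm_ring
  refine ⟨fun n => hreg.pow n, ?_, ?_⟩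
  · intro a n
    induction n with
    | zero => exact ⟨a, 0, by simp⟩
    | succ n ih =>
      obtain ⟨b, m, hb⟩ := ih
      obtain ⟨N, hN⟩ := hnil b
      obtain ⟨b', m', hb'⟩ := L1 N b hN
      refine ⟨b', m' + m, ?_⟩
      calc f ^ (m' + m) * a = f ^ m' * (f ^ m * a) := by rw [pow_add, mul_assoc]
        _ = f ^ m' * (b * f ^ n) := by rw [hb]
        _ = (f ^ m' * b) * f ^ n := by rw [mul_assoc]
        _ = (b' * f) * f ^ n := by rw [hb']
        _ = b' * f ^ (n + 1) := by rw [mul_assoc, ← pow_succ']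
  · intro a n
    induction n with
    | zero => exact ⟨a, 0, by simp⟩
    | succ n ih =>
      obtain ⟨c, r, hc⟩ := ih
      obtain ⟨N, hN⟩ := hnil c
      obtain ⟨c', r', hc'⟩ := L2 N c hN
      refine ⟨c', r + r', ?_⟩
      calc a * f ^ (r + r') = (a * f ^ r) * f ^ r' := by rw [pow_add, mul_assoc]
        _ = (f ^ n * c) * f ^ r' := by rw [hc]
        _ = f ^ n * (c * f ^ r') := by rw [mul_assoc]
        _ = f ^ n * (f * c') := by rw [hc']
        _ = f ^ (n + 1) * c' := by rw [← mul_assoc, ← pow_succ]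
end

section
/- Let A be a ring and let f be a unit of A. Suppose a ∈ A satisfies ad(f)^N(a) = 0 for some N ∈ ℕ. Then for every integer n ≥ 1 one has a·f^{−n} = f^{−n} · ( Σ_{k=0}^{N−1} C(n+k−1, k) · f^{−k} · ad(f)^k(a) ) and f^{−n}·a = Σ_{k=0}^{N−1} (−1)^k · C(n+k−1, k) · ad(f)^k(a) · f^{−n−k}, where C(·,·) denotes binomial coefficients and f^{−m} denotes the m-th power of the inverse of f. -/
open Finset

section CommNegPowAux


variable {A : Type*} [Ring A]

theorem cnp_hockey (n m : ℕ) :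
    ∑ k ∈ range (m + 1), (n + k - 1).choose k = (n + m).choose m := by
  induction m with
  | zero => simp
  | succ m ih =>
      rw [Finset.sum_range_succ, ih, show n + (m + 1) - 1 = n + m by omega]
      exact (Nat.choose_succ_succ (n + m) m).symm

theorem cnp_core (F : ℕ → A) (N n : ℕ) :
    ∑ k ∈ range N, ∑ j ∈ range (N - k), ((n + k - 1).choose k : ℤ) • F (k + j)
      = ∑ m ∈ range N, ((n + m).choose m : ℤ) • F m := by
  have h1 : ∀ k ∈ range N,
      ∑ j ∈ range (N - k), ((n + k - 1).choose k : ℤ) • F (k + j)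
        = ∑ m ∈ Ico k N, ((n + k - 1).choose k : ℤ) • F m := by
    intro k hk
    rw [Finset.sum_Ico_eq_sum_range]
  rw [Finset.sum_congr rfl h1, ← Nat.Ico_zero_eq_range,
    Finset.sum_Ico_Ico_comm 0 N (fun k m => ((n + k - 1).choose k : ℤ) • F m)]
  refine Finset.sum_congr rfl fun m hm => ?_
  rw [Nat.Ico_zero_eq_range, ← Finset.sum_smul]
  congr 1
  rw [← Nat.cast_sum, cnp_hockey]

theorem cnp_base_right (u : Aˣ) :
    ∀ (M : ℕ) (x : A), (fun y => (u : A) * y - y * (u : A))^[M] x = 0 →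
      x * ((u⁻¹ : Aˣ) : A) =
        ((u⁻¹ : Aˣ) : A) *
          ∑ k ∈ range M,
            ((u⁻¹ : Aˣ) : A) ^ k * (fun y => (u : A) * y - y * (u : A))^[k] x := by
  intro M
  induction M with
  | zero =>
      intro x hx
      simp only [Function.iterate_zero, id_eq] at hx
      simp [hx]
  | succ M ih =>
      intro x hx
      have hx' : (fun y => (u : A) * y - y * (u : A))^[M]
          ((u : A) * x - x * (u : A)) = 0 := by
        rw [← Function.iterate_succ_apply]; exact hx
      have key : x * ((u⁻¹ : Aˣ) : A) =
          ((u⁻¹ : Aˣ) : A) * (((u : A) * x - x * (u : A)) * ((u⁻¹ : Aˣ) : A) + x) := by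
        simp only [sub_mul, mul_add, mul_sub, mul_assoc, Units.mul_inv, mul_one]
        rw [sub_add_cancel, ← mul_assoc, Units.inv_mul, one_mul]
      rw [key, ih _ hx']
      congr 1
      rw [Finset.sum_range_succ']
      simp only [Function.iterate_succ_apply, pow_zero, one_mul, Function.iterate_zero, id_eq]
      rw [Finset.mul_sum]
      congr 1
      refine Finset.sum_congr rfl fun k hk => ?_
      rw [← mul_assoc, ← pow_succ']

theorem cnp_base_left (u : Aˣ) :
    ∀ (M : ℕ) (x : A), (fun y => (u : A) * y - y * (u : A))^[M] x = 0 →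
      ((u⁻¹ : Aˣ) : A) * x =
        ∑ k ∈ range M,
          ((-1 : ℤ) ^ k) •
            ((fun y => (u : A) * y - y * (u : A))^[k] x * ((u⁻¹ : Aˣ) : A) ^ (1 + k)) := by
  intro M
  induction M with
  | zero =>
      intro x hx
      simp only [Function.iterate_zero, id_eq] at hx
      simp [hx]
  | succ M ih =>
      intro x hx
      have hx' : (fun y => (u : A) * y - y * (u : A))^[M]
          ((u : A) * x - x * (u : A)) = 0 := by
        rw [← Function.iterate_succ_apply]; exact hx
      have key : ((u⁻¹ : Aˣ) : A) * x =
          x * ((u⁻¹ : Aˣ) : A) -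
            (((u⁻¹ : Aˣ) : A) * ((u : A) * x - x * (u : A))) * ((u⁻¹ : Aˣ) : A) := by
        simp only [mul_sub, sub_mul, mul_assoc, Units.mul_inv, mul_one]
        rw [← mul_assoc, Units.inv_mul, one_mul]
        abel
      rw [key, ih _ hx']
      rw [Finset.sum_range_succ']
      simp only [Function.iterate_succ_apply, pow_zero, one_smul, Function.iterate_zero, id_eq]
      rw [Finset.sum_mul, sub_eq_add_neg, ← Finset.sum_neg_distrib, add_comm]
      congr 1
      · refine Finset.sum_congr rfl fun k hk => ?_
        rw [smul_mul_assoc, mul_assoc, ← pow_succ, ← neg_smul]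
        congr 1
        ring
      · rw [pow_one]

theorem cnp_main_right (u : Aˣ) (a : A) (N : ℕ)
    (hN : (fun y => (u : A) * y - y * (u : A))^[N] a = 0) (n : ℕ) :
    a * ((u⁻¹ : Aˣ) : A) ^ n =
      ((u⁻¹ : Aˣ) : A) ^ n *
        ∑ k ∈ range N, ((n + k - 1).choose k : ℤ) •
          (((u⁻¹ : Aˣ) : A) ^ k * (fun y => (u : A) * y - y * (u : A))^[k] a) := by
  induction n with
  | zero =>
      simp only [pow_zero, one_mul, zero_add]
      rcases N with - | M
      · simpa using hN
      · rw [Finset.sum_eq_single 0]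
        · simp
        · intro k hk hk0
          rw [show (k - 1).choose k = 0 from Nat.choose_eq_zero_of_lt (by omega)]
          simp
        · simp
  | succ n ih =>
      have hD : ∀ k, k ≤ N → (fun y => (u : A) * y - y * (u : A))^[k] a *
          ((u⁻¹ : Aˣ) : A) = ((u⁻¹ : Aˣ) : A) * ∑ j ∈ range (N - k),
            ((u⁻¹ : Aˣ) : A) ^ j *
              (fun y => (u : A) * y - y * (u : A))^[k + j] a := by
        intro k hk
        have h0 : (fun y => (u : A) * y - y * (u : A))^[N - k]
            ((fun y => (u : A) * y - y * (u : A))^[k] a) = 0 := by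
          rw [← Function.iterate_add_apply, Nat.sub_add_cancel hk]; exact hN
        rw [cnp_base_right u (N - k) _ h0]
        congr 1
        refine Finset.sum_congr rfl fun j hj => ?_
        rw [← Function.iterate_add_apply, Nat.add_comm j k]
      calc a * ((u⁻¹ : Aˣ) : A) ^ (n + 1)
          = (a * ((u⁻¹ : Aˣ) : A) ^ n) * ((u⁻¹ : Aˣ) : A) := by
            rw [pow_succ, mul_assoc]
        _ = ((u⁻¹ : Aˣ) : A) ^ n *
            ((∑ k ∈ range N, ((n + k - 1).choose k : ℤ) •
              (((u⁻¹ : Aˣ) : A) ^ k * (fun y => (u : A) * y - y * (u : A))^[k] a)) *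
              ((u⁻¹ : Aˣ) : A)) := by rw [ih, mul_assoc]
        _ = ((u⁻¹ : Aˣ) : A) ^ n * (((u⁻¹ : Aˣ) : A) *
            ∑ k ∈ range N, ∑ j ∈ range (N - k), ((n + k - 1).choose k : ℤ) •
              (((u⁻¹ : Aˣ) : A) ^ (k + j) *
                (fun y => (u : A) * y - y * (u : A))^[k + j] a)) := by
            congr 1
            rw [Finset.sum_mul, Finset.mul_sum]
            refine Finset.sum_congr rfl fun k hk => ?_
            rw [smul_mul_assoc, mul_assoc, hD k (le_of_lt (Finset.mem_range.mp hk)),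
              ← mul_assoc, ← pow_succ, pow_succ', mul_assoc, ← mul_smul_comm]
            congr 1
            rw [Finset.mul_sum, Finset.smul_sum]
            refine Finset.sum_congr rfl fun j hj => ?_
            rw [← mul_assoc, ← pow_add]
        _ = ((u⁻¹ : Aˣ) : A) ^ (n + 1) *
            ∑ m ∈ range N, ((n + m).choose m : ℤ) •
              (((u⁻¹ : Aˣ) : A) ^ m * (fun y => (u : A) * y - y * (u : A))^[m] a) := by
            rw [← mul_assoc, ← pow_succ]
            congr 1
            exact cnp_core (fun m => ((u⁻¹ : Aˣ) : A) ^ m * (fun y => (u : A) * y - y * (u : A))^[m] a) N n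
        _ = ((u⁻¹ : Aˣ) : A) ^ (n + 1) *
            ∑ k ∈ range N, ((n + 1 + k - 1).choose k : ℤ) •
              (((u⁻¹ : Aˣ) : A) ^ k * (fun y => (u : A) * y - y * (u : A))^[k] a) := by
            congr 1
            refine Finset.sum_congr rfl fun m hm => ?_
            rw [show n + 1 + m - 1 = n + m by omega]


theorem cnp_main_left (u : Aˣ) (a : A) (N : ℕ)
    (hN : (fun y => (u : A) * y - y * (u : A))^[N] a = 0) (n : ℕ) :
    ((u⁻¹ : Aˣ) : A) ^ n * a =
      ∑ k ∈ range N, ((-1 : ℤ) ^ k * (n + k - 1).choose k) •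
        ((fun y => (u : A) * y - y * (u : A))^[k] a * ((u⁻¹ : Aˣ) : A) ^ (n + k)) := by
  induction n with
  | zero =>
      simp only [pow_zero, one_mul, zero_add]
      rcases N with - | M
      · simpa using hN
      · rw [Finset.sum_eq_single 0]
        · simp
        · intro k hk hk0
          rw [show (k - 1).choose k = 0 from Nat.choose_eq_zero_of_lt (by omega)]
          simp
        · simp
  | succ n ih =>
      have hD : ∀ k, k ≤ N → ((u⁻¹ : Aˣ) : A) * (fun y => (u : A) * y - y * (u : A))^[k] a =
          ∑ j ∈ range (N - k), ((-1 : ℤ) ^ j) •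
            ((fun y => (u : A) * y - y * (u : A))^[k + j] a * ((u⁻¹ : Aˣ) : A) ^ (1 + j)) := by
        intro k hk
        have h0 : (fun y => (u : A) * y - y * (u : A))^[N - k]
            ((fun y => (u : A) * y - y * (u : A))^[k] a) = 0 := by
          rw [← Function.iterate_add_apply, Nat.sub_add_cancel hk]; exact hN
        rw [cnp_base_left u (N - k) _ h0]
        refine Finset.sum_congr rfl fun j hj => ?_
        rw [← Function.iterate_add_apply, Nat.add_comm j k]
      calc ((u⁻¹ : Aˣ) : A) ^ (n + 1) * a
          = ((u⁻¹ : Aˣ) : A) * (((u⁻¹ : Aˣ) : A) ^ n * a) := by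
            rw [pow_succ', mul_assoc]
        _ = ((u⁻¹ : Aˣ) : A) * ∑ k ∈ range N, ((-1 : ℤ) ^ k * (n + k - 1).choose k) •
              ((fun y => (u : A) * y - y * (u : A))^[k] a * ((u⁻¹ : Aˣ) : A) ^ (n + k)) := by
            rw [ih]
        _ = ∑ k ∈ range N, ∑ j ∈ range (N - k), ((n + k - 1).choose k : ℤ) •
              (((-1 : ℤ) ^ (k + j)) •
                ((fun y => (u : A) * y - y * (u : A))^[k + j] a *
                  ((u⁻¹ : Aˣ) : A) ^ (n + 1 + (k + j)))) := by
            rw [Finset.mul_sum]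
            refine Finset.sum_congr rfl fun k hk => ?_
            rw [mul_smul_comm, ← mul_assoc, hD k (le_of_lt (Finset.mem_range.mp hk)),
              Finset.sum_mul, Finset.smul_sum]
            refine Finset.sum_congr rfl fun j hj => ?_
            rw [smul_mul_assoc, mul_assoc, ← pow_add,
              show 1 + j + (n + k) = n + 1 + (k + j) by omega, smul_smul, smul_smul]
            congr 1
            ring
        _ = ∑ m ∈ range N, ((n + m).choose m : ℤ) •
              (((-1 : ℤ) ^ m) •
                ((fun y => (u : A) * y - y * (u : A))^[m] a *
                  ((u⁻¹ : Aˣ) : A) ^ (n + 1 + m))) :=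
            cnp_core (fun m => ((-1 : ℤ) ^ m) •
              ((fun y => (u : A) * y - y * (u : A))^[m] a *
                ((u⁻¹ : Aˣ) : A) ^ (n + 1 + m))) N n
        _ = ∑ k ∈ range N, ((-1 : ℤ) ^ k * (n + 1 + k - 1).choose k) •
              ((fun y => (u : A) * y - y * (u : A))^[k] a *
                ((u⁻¹ : Aˣ) : A) ^ (n + 1 + k)) := by
            refine Finset.sum_congr rfl fun m hm => ?_
            rw [smul_smul, show n + 1 + m - 1 = n + m by omega]
            congr 1
            ring

end CommNegPowAux

/-- Let `A` be a ring and `f = ↑u` a unit of `A`.  If `a ∈ A` satisfies `ad(f)^N(a) = 0` for some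
`N ∈ ℕ`, then for every `n ≥ 1` one has
`a·f^{−n} = f^{−n} · ( Σ_{k=0}^{N−1} C(n+k−1,k) · f^{−k} · ad(f)^k(a) )` and
`f^{−n}·a = Σ_{k=0}^{N−1} (−1)^k · C(n+k−1,k) · ad(f)^k(a) · f^{−n−k}`,
where `f^{−m}` denotes the `m`-th power of the inverse of `f`. -/
theorem commute_with_negative_powers_of_locally_ad_nilpotent
    {A : Type*} [Ring A] (u : Aˣ) (a : A) (N : ℕ)
    (hN : (fun x => (u : A) * x - x * (u : A))^[N] a = 0) :
    ∀ n : ℕ, 1 ≤ n →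
      (a * ((u⁻¹ : Aˣ) : A) ^ n =
        ((u⁻¹ : Aˣ) : A) ^ n *
          ∑ k ∈ Finset.range N,
            (Nat.choose (n + k - 1) k : A) *
              (((u⁻¹ : Aˣ) : A) ^ k *
                (fun x => (u : A) * x - x * (u : A))^[k] a)) ∧
      (((u⁻¹ : Aˣ) : A) ^ n * a =
        ∑ k ∈ Finset.range N,
          (-1 : A) ^ k * (Nat.choose (n + k - 1) k : A) *
            ((fun x => (u : A) * x - x * (u : A))^[k] a *
              ((u⁻¹ : Aˣ) : A) ^ (n + k))) := by
  intro n hn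
  constructor
  · rw [cnp_main_right u a N hN n]
    congr 1
    refine Finset.sum_congr rfl fun k hk => ?_
    rw [zsmul_eq_mul, Int.cast_natCast]
  · rw [cnp_main_left u a N hN n]
    refine Finset.sum_congr rfl fun k hk => ?_
    rw [zsmul_eq_mul]
    push_cast
    rfl
end

section
/- Let A be an associative ring, f ∈ A a regular, locally ad-nilpotent element, and M a left A-module such that the canonical map M → M_{(f)} into the Ore localization of M at the powers of f is injective. Then the annihilators coincide: {a ∈ A : a·w = 0 for all w ∈ M_{(f)}} = {a ∈ A : a·v = 0 for all v ∈ M}. -/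
/-- `ι : M →ₗ[A] M'` realizes `M'` as the Ore localization `M_{(f)}` of the left `A`-module `M`
at the powers of `f`: the action of `f` on `M'` is bijective, every element of `M'` has the form
`f^{-n} • (ι v)`, and the kernel of the canonical map `ι` is the `f`-power torsion of `M`. -/
structure IsOreLocalizationAtPowers {A : Type*} [Ring A] (f : A)
    {M M' : Type*} [AddCommGroup M] [Module A M] [AddCommGroup M'] [Module A M']
    (ι : M →ₗ[A] M') : Prop where
  smul_bijective : Function.Bijective fun w : M' => f • w
  exists_pow_smul_mem : ∀ w : M', ∃ (n : ℕ) (v : M), f ^ n • w = ι v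
  ker_eq_torsion : ∀ v : M, ι v = 0 → ∃ n : ℕ, f ^ n • v = 0

/-- Let `A` be an associative ring, `f ∈ A` a regular, locally ad-nilpotent element, and `M` a left
`A`-module such that the canonical map `M → M_{(f)}` into the Ore localization of `M` at the
powers of `f` is injective.  Then the annihilators coincide:
`{a ∈ A : a·w = 0 ∀ w ∈ M_{(f)}} = {a ∈ A : a·v = 0 ∀ v ∈ M}`. -/
theorem annihilator_oreLocalization_eq_annihilator
    {A : Type*} [Ring A] (f : A)
    (hreg : IsRegular f)
    (hnil : ∀ a : A, ∃ n : ℕ, (fun x => f * x - x * f)^[n] a = 0)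
    {M M' : Type*} [AddCommGroup M] [Module A M] [AddCommGroup M'] [Module A M']
    (ι : M →ₗ[A] M') (hloc : IsOreLocalizationAtPowers f ι)
    (hinj : Function.Injective ι) :
    {a : A | ∀ w : M', a • w = 0} = {a : A | ∀ v : M, a • v = 0} := by
  have key : ∀ n : ℕ, ∀ w : M', (∃ v : M, f ^ n • w = ι v) →
      ∀ a : A, (∀ v : M, a • v = (0 : M)) → a • w = 0 := by
    intro n
    induction n with
    | zero =>
      rintro w ⟨v, hv⟩ a ha
      rw [pow_zero, one_smul] at hv
      rw [hv, ← map_smul, ha, map_zero]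
    | succ n ih =>
      rintro w ⟨v, hv⟩ a ha
      have hfw : ∀ b : A, (∀ v : M, b • v = (0 : M)) → b • (f • w) = 0 := by
        intro b hb
        exact ih (f • w) ⟨v, by rw [← hv, pow_succ, mul_smul]⟩ b hb
      have inner : ∀ m : ℕ, ∀ a : A, (∀ v : M, a • v = (0 : M)) →
          (fun x => f * x - x * f)^[m] a = 0 → a • w = 0 := by
        intro m
        induction m with
        | zero =>
          intro a _ hm
          simp only [Function.iterate_zero_apply] at hm
          rw [hm, zero_smul]
        | succ m ihm =>
          intro a ha hm
          have hIb : ∀ v : M, (f * a - a * f) • v = (0 : M) := by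
            intro v
            rw [sub_smul, mul_smul, mul_smul, ha, ha (f • v), smul_zero, sub_zero]
          have hbw : (f * a - a * f) • w = 0 :=
            ihm _ hIb (by rwa [Function.iterate_succ_apply] at hm)
          have hfaw : f • (a • w) = 0 := by
            rw [sub_smul, sub_eq_zero] at hbw
            calc f • (a • w) = (f * a) • w := (mul_smul _ _ _).symm
              _ = (a * f) • w := hbw
              _ = a • (f • w) := mul_smul _ _ _
              _ = 0 := hfw a ha
          apply hloc.smul_bijective.injective
          simpa using hfaw
      obtain ⟨m, hm⟩ := hnil a
      exact inner m a ha hm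
  ext a
  simp only [Set.mem_setOf_eq]
  constructor
  · intro h v
    apply hinj
    rw [map_smul, h, map_zero]
  · intro ha w
    obtain ⟨n, v, hv⟩ := hloc.exists_pow_smul_mem w
    exact key n w ⟨v, hv⟩ a ha
end

section
/- Let A be an associative ring, f ∈ A a regular, locally ad-nilpotent element, and M a left A-module such that the canonical map M → M_{(f)} is injective. Then the map sending the class of v ∈ M in M/fM to the class of f^{−1}·v in T_f(M) = M_{(f)}/M is a well-defined isomorphism of abelian groups from M/fM onto the f-torsion part of degree one of T_f(M), namely {w ∈ T_f(M) : f·w = 0}. -/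
/-- Let `A` be a ring, `f ∈ A` regular and locally ad-nilpotent, and `M` a left `A`-module whose
canonical map `ι : M → M_{(f)}` is injective.  Let `j` denote the inverse of the (bijective)
action of `f` on `M_{(f)}`, and let `φ : M → T_f(M) = M_{(f)}/M` send `v` to the class of
`f^{-1}·(ι v)`.  Then `φ` is additive, takes values in `{w ∈ T_f(M) : f·w = 0}`, has kernel
exactly `f·M`, and is onto `{w ∈ T_f(M) : f·w = 0}`; i.e. it induces a well-defined isomorphism
of abelian groups `M/fM ≅ {w ∈ T_f(M) : f·w = 0}`. -/
theorem quotient_by_f_iso_f_torsion_of_twist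
    {A : Type*} [Ring A] (f : A)
    (hreg : IsRegular f)
    (hnil : ∀ a : A, ∃ n : ℕ, (fun x => f * x - x * f)^[n] a = 0)
    {M M' : Type*} [AddCommGroup M] [Module A M] [AddCommGroup M'] [Module A M']
    (ι : M →ₗ[A] M') (hloc : IsOreLocalizationAtPowers f ι)
    (hinj : Function.Injective ι)
    (j : M' → M') (hj : ∀ w : M', f • j w = w)
    (φ : M → M' ⧸ LinearMap.range ι)
    (hφ : ∀ v : M, φ v = Submodule.Quotient.mk (j (ι v))) :
    (∀ v w : M, φ (v + w) = φ v + φ w) ∧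
    (∀ v : M, f • φ v = 0) ∧
    (∀ v : M, φ v = 0 ↔ ∃ u : M, v = f • u) ∧
    (∀ t : M' ⧸ LinearMap.range ι, f • t = 0 → ∃ v : M, φ v = t) := by
  have hsinj : Function.Injective (fun w : M' => f • w) := hloc.smul_bijective.1
  have hjadd : ∀ a b : M', j (a + b) = j a + j b := by
    intro a b
    apply hsinj
    simp only [smul_add, hj]
  refine ⟨?_, ?_, ?_, ?_⟩
  · intro v w
    simp [hφ, map_add, hjadd, Submodule.Quotient.mk_add]
  · intro v
    rw [hφ, ← Submodule.Quotient.mk_smul, hj]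
    exact (Submodule.Quotient.mk_eq_zero _).2 ⟨v, rfl⟩
  · intro v
    constructor
    · intro h
      rw [hφ, Submodule.Quotient.mk_eq_zero] at h
      obtain ⟨u, hu⟩ := h
      refine ⟨u, hinj ?_⟩
      rw [map_smul, hu, hj]
    · rintro ⟨u, rfl⟩
      rw [hφ, Submodule.Quotient.mk_eq_zero]
      refine ⟨u, hsinj ?_⟩
      simp only [hj, map_smul]
  · intro t ht
    obtain ⟨w, rfl⟩ := Submodule.Quotient.mk_surjective _ t
    rw [← Submodule.Quotient.mk_smul, Submodule.Quotient.mk_eq_zero] at ht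
    obtain ⟨v, hv⟩ := ht
    refine ⟨v, ?_⟩
    rw [hφ]
    congr 1
    apply hsinj
    simp only [hj, hv]
end
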